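/- For a, a', a'' in W, writing T_a T_{a'} T_{a''} = Σ_b f(a,a',a'',b) T_b with f(a,a',a'',b) ∈ ℤ[q] and setting n = ℓ(a)+ℓ(a''), the coefficient of q^n in f(a,a',a'',a') is nonnegative, the coefficient of q^i in f(a,a',a'',a') vanishes for i > n, and the coefficient of q^n equals 1 if the support of a is contained in the left descent set of a' and the support of a'' is contained in the right descent set of a'. -/

import Mathlib

open Polynomial

/-- The support of `w`: the set of simple-reflection indices appearing in some
(equivalently, any) reduced word for `w`. -/
def CoxeterSystem.support {B W : Type} [Group W] {M : CoxeterMatrix B}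
    (cs : CoxeterSystem M W) (w : W) : Set B :=
  {i | ∃ l : List B, cs.IsReduced l ∧ cs.wordProd l = w ∧ i ∈ l}

/-!
In the basis `T_w`, left multiplication by `T_s` raises the `q`-degree of every coordinate by at
most one, and the new top coefficient at `u` is the old top coefficient at `s ⋆ u`, where
`s ⋆ u` is `u` if `s` is a left descent of `u` and `s u` otherwise (the Demazure action).
Iterating along reduced words of `a` and of `a''` (right multiplication being left
multiplication in the opposite algebra, with basis `w ↦ T_{w⁻¹}`), the coefficient of
`q^{ℓ(a)+ℓ(a'')}` at `a'` in `T_a T_{a'} T_{a''}` is the coordinate of `T_{a'}` at some `v`,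
hence `0` or `1`; and `v = a'` when the letters of `a` are left descents and those of `a''`
right descents of `a'`.
-/

namespace Polynomial

variable {S : Type*} [CommRing S] {p r : S[X]} {m : ℕ}

theorem natDegree_add_X_sub_one_mul_le (hp : p.natDegree ≤ m) (hr : r.natDegree ≤ m) :
    (p + (X - 1) * r).natDegree ≤ m + 1 := by
  refine natDegree_add_le_of_degree_le (hp.trans m.le_succ) (natDegree_mul_le.trans ?_)
  have : (X - 1 : S[X]).natDegree ≤ 1 := by compute_degree
  omega

theorem coeff_add_X_sub_one_mul (hp : p.natDegree ≤ m) (hr : r.natDegree ≤ m) :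
    (p + (X - 1) * r).coeff (m + 1) = r.coeff m := by
  rw [coeff_add, sub_mul, one_mul, coeff_sub, coeff_X_mul,
    coeff_eq_zero_of_natDegree_lt (by omega : p.natDegree < m + 1),
    coeff_eq_zero_of_natDegree_lt (by omega : r.natDegree < m + 1), zero_add, sub_zero]

end Polynomial

namespace Module.Basis

variable {R H W : Type*} [CommRing R] [Ring H] [Algebra R H] [Group W]

noncomputable def opInv (T : Basis W R H) : Basis W R Hᵐᵒᵖ :=
  (T.map (MulOpposite.opLinearEquiv R)).reindex (Equiv.inv W)

@[simp]
theorem opInv_apply (T : Basis W R H) (w : W) : T.opInv w = MulOpposite.op (T w⁻¹) := by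
  simp [opInv]

@[simp]
theorem opInv_repr_op (T : Basis W R H) (h : H) (w : W) :
    T.opInv.repr (MulOpposite.op h) w = T.repr h w⁻¹ := by
  rw [opInv, repr_reindex_apply]
  simp

end Module.Basis

namespace CoxeterSystem

variable {B W : Type*} [Group W] {M : CoxeterMatrix B} (cs : CoxeterSystem M W)

noncomputable instance (w : W) (i : B) : Decidable (cs.IsLeftDescent w i) :=
  inferInstanceAs (Decidable (_ < _))

noncomputable def demazureSimpleMul (i : B) (u : W) : W :=
  if cs.IsLeftDescent u i then u else cs.simple i * u

/-- `cs.demazureFold [i₁, …, iₖ] u = iₖ ⋆ (⋯ ⋆ (i₁ ⋆ u))`: the first letter acts first. -/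
noncomputable def demazureFold (l : List B) (u : W) : W :=
  l.foldl (fun v i => cs.demazureSimpleMul i v) u

theorem demazureFold_eq_self {l : List B} {u : W} (h : ∀ i ∈ l, cs.IsLeftDescent u i) :
    cs.demazureFold l u = u := by
  induction l with
  | nil => rfl
  | cons i l ih =>
    simp only [demazureFold, List.foldl_cons, demazureSimpleMul, if_pos (h i List.mem_cons_self)]
    exact ih fun j hj => h j (List.mem_cons_of_mem i hj)

section Hecke

variable {R H : Type*} [CommRing R] [Ring H] [Algebra R H]

structure IsHeckeBasis (q : R) (T : Module.Basis W R H) : Prop where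
  one : T 1 = 1
  mul_of_length_add : ∀ w w' : W, cs.length (w * w') = cs.length w + cs.length w' →
    T w * T w' = T (w * w')
  quadratic : ∀ i : B, (T (cs.simple i) + 1) * (T (cs.simple i) - algebraMap R H q) = 0

theorem opInv_wordProd_reverse_mul_op (T : Module.Basis W R H) (r : List B) (h : H) :
    T.opInv (cs.wordProd r.reverse) * MulOpposite.op h =
      MulOpposite.op (h * T (cs.wordProd r)) := by
  simp

namespace IsHeckeBasis

variable {cs} {q : R} {T : Module.Basis W R H}

theorem simple_mul_simple (hT : cs.IsHeckeBasis q T) (i : B) :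
    T (cs.simple i) * T (cs.simple i) = (q - 1) • T (cs.simple i) + q • 1 := by
  set t := T (cs.simple i)
  have hc : t * algebraMap R H q = algebraMap R H q * t := (Algebra.commutes q t).symm
  rw [Algebra.smul_def, Algebra.smul_def, map_sub, map_one, mul_one]
  calc t * t = (t + 1) * (t - algebraMap R H q) + (t * algebraMap R H q - algebraMap R H q * t)
        + ((algebraMap R H q - 1) * t + algebraMap R H q) := by noncomm_ring
    _ = _ := by rw [hT.quadratic i, hc, sub_self, zero_add, zero_add]

theorem simple_mul_of_not_isLeftDescent (hT : cs.IsHeckeBasis q T) {w : W} {i : B}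
    (h : ¬cs.IsLeftDescent w i) : T (cs.simple i) * T w = T (cs.simple i * w) :=
  hT.mul_of_length_add _ _ (by rw [cs.length_simple, cs.not_isLeftDescent_iff.mp h, add_comm])

theorem simple_mul_of_isLeftDescent (hT : cs.IsHeckeBasis q T) {w : W} {i : B}
    (h : cs.IsLeftDescent w i) :
    T (cs.simple i) * T w = q • T (cs.simple i * w) + (q - 1) • T w := by
  have hw : T (cs.simple i) * T (cs.simple i * w) = T w := by
    rw [hT.simple_mul_of_not_isLeftDescent (cs.isLeftDescent_iff_not_isLeftDescent_mul.mp h),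
      cs.simple_mul_simple_cancel_left]
  rw [← hw, ← mul_assoc, hT.simple_mul_simple, add_mul, smul_mul_assoc, smul_mul_assoc, one_mul,
    add_comm]

theorem simple_mul (hT : cs.IsHeckeBasis q T) (i : B) (w : W) :
    T (cs.simple i) * T w = if cs.IsLeftDescent w i
      then q • T (cs.simple i * w) + (q - 1) • T w else T (cs.simple i * w) := by
  split_ifs with h
  exacts [hT.simple_mul_of_isLeftDescent h, hT.simple_mul_of_not_isLeftDescent h]

theorem repr_simple_mul (hT : cs.IsHeckeBasis q T) (i : B) (h : H) (u : W) :
    T.repr (T (cs.simple i) * h) u =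
      if cs.IsLeftDescent u i then T.repr h (cs.simple i * u) + (q - 1) * T.repr h u
      else q * T.repr h (cs.simple i * u) := by
  let rhs : H →ₗ[R] R := if cs.IsLeftDescent u i
    then T.coord (cs.simple i * u) + (q - 1) • T.coord u else q • T.coord (cs.simple i * u)
  suffices T.coord u ∘ₗ LinearMap.mulLeft R (T (cs.simple i)) = rhs by
    have := LinearMap.congr_fun this h
    simp only [rhs] at this
    split_ifs at this ⊢ <;> simpa using this
  refine T.ext fun w => ?_
  simp only [rhs, LinearMap.comp_apply, LinearMap.mulLeft_apply, Module.Basis.coord_apply]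
  have hsu : cs.simple i * u ≠ u := fun h => cs.length_simple_mul_ne u i (congrArg cs.length h)
  rw [hT.simple_mul]
  rcases eq_or_ne w u with rfl | hwu
  · split_ifs <;> simp [hsu]
  rcases eq_or_ne w (cs.simple i * u) with rfl | hwsu
  · have := cs.isLeftDescent_iff_not_isLeftDescent_mul (w := u) (i := i)
    split_ifs <;> simp_all
  · have hswu : cs.simple i * w ≠ u := by rintro rfl; simp at hwsu
    split_ifs <;> simp [hwsu, hswu, hwu.symm]

theorem apply_wordProd_cons (hT : cs.IsHeckeBasis q T) {i : B} {l : List B}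
    (hl : cs.IsReduced (i :: l)) :
    T (cs.wordProd (i :: l)) = T (cs.simple i) * T (cs.wordProd l) := by
  have hl' : cs.IsReduced l := hl.drop 1
  rw [cs.wordProd_cons, hT.mul_of_length_add]
  rw [← cs.wordProd_cons, hl.eq, hl'.eq, cs.length_simple, List.length_cons, add_comm]

theorem opInv (hT : cs.IsHeckeBasis q T) : cs.IsHeckeBasis q T.opInv where
  one := by simp [hT.one]
  mul_of_length_add w w' h := by
    have h' : cs.length (w'⁻¹ * w⁻¹) = cs.length w'⁻¹ + cs.length w⁻¹ := by
      rw [← mul_inv_rev, cs.length_inv, cs.length_inv, cs.length_inv, h, add_comm]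
    simp [← MulOpposite.op_mul, hT.mul_of_length_add _ _ h']
  quadratic i := by
    have hc : Commute (T (cs.simple i) + 1) (T (cs.simple i) - algebraMap R H q) :=
      ((Commute.refl _).sub_right (Algebra.commute_algebraMap_right q _)).add_left
        (Commute.one_left _)
    simp only [Module.Basis.opInv_apply, CoxeterSystem.inv_simple, MulOpposite.algebraMap_apply]
    rw [← MulOpposite.op_one, ← MulOpposite.op_add, ← MulOpposite.op_sub,
      ← MulOpposite.op_mul, ← hc.eq, hT.quadratic, MulOpposite.op_zero]

end IsHeckeBasis

end Hecke

namespace IsHeckeBasis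

variable {cs} {S H : Type*} [CommRing S] [Ring H] [Algebra S[X] H] {T : Module.Basis W S[X] H}
  {h : H} {m : ℕ}

theorem natDegree_repr_simple_mul_le (hT : cs.IsHeckeBasis X T)
    (hh : ∀ w, (T.repr h w).natDegree ≤ m) (i : B) (u : W) :
    (T.repr (T (cs.simple i) * h) u).natDegree ≤ m + 1 := by
  rw [hT.repr_simple_mul]
  split_ifs
  · exact natDegree_add_X_sub_one_mul_le (hh _) (hh u)
  · exact (natDegree_mul_le.trans (add_le_add natDegree_X_le (hh _))).trans_eq (add_comm 1 m)

theorem coeff_repr_simple_mul (hT : cs.IsHeckeBasis X T)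
    (hh : ∀ w, (T.repr h w).natDegree ≤ m) (i : B) (u : W) :
    (T.repr (T (cs.simple i) * h) u).coeff (m + 1) =
      (T.repr h (cs.demazureSimpleMul i u)).coeff m := by
  rw [hT.repr_simple_mul, demazureSimpleMul]
  split_ifs
  · exact coeff_add_X_sub_one_mul (hh _) (hh u)
  · exact coeff_X_mul _ _

theorem natDegree_repr_wordProd_mul_le (hT : cs.IsHeckeBasis X T) {l : List B}
    (hl : cs.IsReduced l) (hh : ∀ w, (T.repr h w).natDegree ≤ m) (u : W) :
    (T.repr (T (cs.wordProd l) * h) u).natDegree ≤ l.length + m := by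
  induction l generalizing u with
  | nil => simpa [hT.one] using hh u
  | cons i l ih =>
    rw [hT.apply_wordProd_cons hl, mul_assoc, List.length_cons, add_right_comm]
    exact hT.natDegree_repr_simple_mul_le (ih (hl.drop 1)) i u

theorem coeff_repr_wordProd_mul (hT : cs.IsHeckeBasis X T) {l : List B}
    (hl : cs.IsReduced l) (hh : ∀ w, (T.repr h w).natDegree ≤ m) (u : W) :
    (T.repr (T (cs.wordProd l) * h) u).coeff (l.length + m) =
      (T.repr h (cs.demazureFold l u)).coeff m := by
  induction l generalizing u with
  | nil => simp [hT.one, demazureFold]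
  | cons i l ih =>
    have hl' : cs.IsReduced l := hl.drop 1
    rw [hT.apply_wordProd_cons hl, mul_assoc, List.length_cons, add_right_comm,
      hT.coeff_repr_simple_mul (hT.natDegree_repr_wordProd_mul_le hl' hh), ih hl']
    rfl

theorem natDegree_repr_mul_wordProd_le (hT : cs.IsHeckeBasis X T) {r : List B}
    (hr : cs.IsReduced r) (hh : ∀ w, (T.repr h w).natDegree ≤ m) (u : W) :
    (T.repr (h * T (cs.wordProd r)) u).natDegree ≤ r.length + m := by
  have h' := hT.opInv.natDegree_repr_wordProd_mul_le hr.reverse (h := MulOpposite.op h)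
    (by simpa using fun w => hh w⁻¹) u⁻¹
  rwa [opInv_wordProd_reverse_mul_op, Module.Basis.opInv_repr_op, inv_inv,
    List.length_reverse] at h'

theorem coeff_repr_mul_wordProd (hT : cs.IsHeckeBasis X T) {r : List B}
    (hr : cs.IsReduced r) (hh : ∀ w, (T.repr h w).natDegree ≤ m) (u : W) :
    (T.repr (h * T (cs.wordProd r)) u).coeff (r.length + m) =
      (T.repr h (cs.demazureFold r.reverse u⁻¹)⁻¹).coeff m := by
  have h' := hT.opInv.coeff_repr_wordProd_mul hr.reverse (h := MulOpposite.op h)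
    (by simpa using fun w => hh w⁻¹) u⁻¹
  rwa [opInv_wordProd_reverse_mul_op, Module.Basis.opInv_repr_op, Module.Basis.opInv_repr_op,
    inv_inv, List.length_reverse] at h'

end IsHeckeBasis

end CoxeterSystem

theorem hecke_triple_product_diagonal_coeff_general
    {B W : Type} [Group W] {M : CoxeterMatrix B} (cs : CoxeterSystem M W)
    (H : Type) [Ring H] [Algebra (Polynomial ℚ) H]
    (T : Module.Basis W (Polynomial ℚ) H)
    (hone : T 1 = 1)
    (hmul : ∀ w w' : W, cs.length (w * w') = cs.length w + cs.length w' →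
      T w * T w' = T (w * w'))
    (hquad : ∀ i : B, (T (cs.simple i) + 1) * (T (cs.simple i) - algebraMap (Polynomial ℚ) H X) = 0)
    (a a' a'' : W) (n : ℕ) (hn : n = cs.length a + cs.length a'') :
    0 ≤ (T.repr (T a * T a' * T a'') a').coeff n ∧
    (∀ i : ℕ, n < i → (T.repr (T a * T a' * T a'') a').coeff i = 0) ∧
    ((∀ i ∈ cs.support a, cs.IsLeftDescent a' i) →
      (∀ i ∈ cs.support a'', cs.IsRightDescent a' i) →
      (T.repr (T a * T a' * T a'') a').coeff n = 1) := by
  classical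
  have hT : cs.IsHeckeBasis X T := ⟨hone, hmul, hquad⟩
  obtain ⟨l, hl, rfl⟩ := cs.exists_isReduced a
  obtain ⟨r, hr, rfl⟩ := cs.exists_isReduced a''
  have hdeg₀ : ∀ w, (T.repr (T a') w).natDegree ≤ 0 := fun w => by
    rw [T.repr_self, Finsupp.single_apply]; split_ifs <;> simp
  have hdeg := hT.natDegree_repr_mul_wordProd_le hr hdeg₀
  have htop : (T.repr (T (cs.wordProd l) * T a' * T (cs.wordProd r)) a').coeff n =
      if a' = (cs.demazureFold r.reverse (cs.demazureFold l a')⁻¹)⁻¹ then 1 else 0 := by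
    rw [mul_assoc, hn, hl.eq, hr.eq, ← add_zero r.length, hT.coeff_repr_wordProd_mul hl hdeg,
      hT.coeff_repr_mul_wordProd hr hdeg₀, T.repr_self, Finsupp.single_apply]
    split_ifs <;> simp
  refine ⟨by rw [htop]; split_ifs <;> norm_num, fun i hi => ?_, fun hL hR => ?_⟩
  · rw [mul_assoc]
    refine coeff_eq_zero_of_natDegree_lt
      ((hT.natDegree_repr_wordProd_mul_le hl hdeg a').trans_lt ?_)
    rw [hn, hl.eq, hr.eq] at hi
    omega
  · have hfixl : cs.demazureFold l a' = a' :=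
      cs.demazureFold_eq_self fun i hi => hL i ⟨l, hl, rfl, hi⟩
    have hfixr : cs.demazureFold r.reverse a'⁻¹ = a'⁻¹ :=
      cs.demazureFold_eq_self fun i hi =>
        cs.isLeftDescent_inv_iff.mpr (hR i ⟨r, hr, rfl, List.mem_reverse.mp hi⟩)
    rw [htop, hfixl, hfixr, inv_inv, if_pos rfl]

/-- with `f(a,a',a'',b)` the coordinates of `T a * T a' * T a''` in the basis
and `n = ℓ(a) + ℓ(a'')`: the coefficient of `q^n` in `f(a,a',a'',a')` is nonnegative, the
coefficient of `q^i` vanishes for `i > n`, and the coefficient of `q^n` is `1` if the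
support of `a` is contained in the left descent set of `a'` and the support of `a''`
is contained in the right descent set of `a'`. -/
theorem hecke_triple_product_diagonal_coeff
    {B W : Type} [Group W] [Finite W] {M : CoxeterMatrix B} (cs : CoxeterSystem M W)
    (H : Type) [Ring H] [Algebra (Polynomial ℚ) H]
    (T : Module.Basis W (Polynomial ℚ) H)
    (hone : T 1 = 1)
    (hmul : ∀ w w' : W, cs.length (w * w') = cs.length w + cs.length w' →
      T w * T w' = T (w * w'))
    (hquad : ∀ i : B, (T (cs.simple i) + 1) * (T (cs.simple i) - algebraMap (Polynomial ℚ) H X) = 0)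
    (a a' a'' : W) (n : ℕ) (hn : n = cs.length a + cs.length a'') :
    0 ≤ (T.repr (T a * T a' * T a'') a').coeff n ∧
    (∀ i : ℕ, n < i → (T.repr (T a * T a' * T a'') a').coeff i = 0) ∧
    ((∀ i ∈ cs.support a, cs.IsLeftDescent a' i) →
      (∀ i ∈ cs.support a'', cs.IsRightDescent a' i) →
      (T.repr (T a * T a' * T a'') a').coeff n = 1) :=
  hecke_triple_product_diagonal_coeff_general cs H T hone hmul hquad a a' a'' n hn
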